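/- Let G be a finite abelian group of order k, m, n ≥ 2, A an m×n partial matrix over G, and B an (m−1)×(n−1) matrix over G. If A is consistent with B, then the number of completions C of A with σ₋(C) = B is exactly k^{c(H_A)−1}, where c(H_A) is the number of connected components of the bipartite graph H_A. -/
import Mathlib

/-- The balanced collapsing sum of an `(m+1) × (n+1)` matrix. -/
def bcs {G : Type*} [AddCommGroup G] {m n : ℕ}
    (A : Matrix (Fin (m + 1)) (Fin (n + 1)) G) : Matrix (Fin m) (Fin n) G :=
  fun i j => A i.castSucc j.castSucc - A i.succ j.castSucc
    - A i.castSucc j.succ + A i.succ j.succ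

/-- `C` is a completion of the partial matrix `A` (blank entries are `none`). -/
def IsCompletion {G : Type*} {m n : ℕ} (A : Matrix (Fin m) (Fin n) (Option G))
    (C : Matrix (Fin m) (Fin n) G) : Prop :=
  ∀ i j, A i j ≠ none → A i j = some (C i j)

/-- The bipartite graph `H_A` of a partial matrix `A`, on the vertex set
`{x_1, …, x_m} ⊕ {y_1, …, y_n}`, with an edge `(x_i, y_j)` whenever `a_{i,j} ≠ ∗`. -/
def HGraph {G : Type*} {m n : ℕ} (A : Matrix (Fin m) (Fin n) (Option G)) :
    SimpleGraph (Fin m ⊕ Fin n) :=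
  SimpleGraph.fromRel (fun u v =>
    ∃ i j, u = Sum.inl i ∧ v = Sum.inr j ∧ A i j ≠ none)

section Aux

variable {G : Type*} [AddCommGroup G] {m n : ℕ}

lemma bcs_sub (C C' : Matrix (Fin (m + 1)) (Fin (n + 1)) G) :
    bcs (C - C') = bcs C - bcs C' := by
  funext i j
  simp only [bcs, Matrix.sub_apply]
  abel

lemma bcs_add (C C' : Matrix (Fin (m + 1)) (Fin (n + 1)) G) :
    bcs (C + C') = bcs C + bcs C' := by
  funext i j
  simp only [bcs, Matrix.add_apply]
  abel

lemma bcs_tele {D : Matrix (Fin (m + 1)) (Fin (n + 1)) G} (h : bcs D = 0) :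
    ∀ i j, D i j + D 0 0 = D i 0 + D 0 j := by
  have h' : ∀ (i : Fin m) (j : Fin n),
      D i.castSucc j.castSucc - D i.succ j.castSucc
        - D i.castSucc j.succ + D i.succ j.succ = 0 := by
    intro i j
    have := congrFun (congrFun h i) j
    simpa [bcs] using this
  intro i
  induction i using Fin.induction with
  | zero => intro j; exact add_comm _ _
  | succ i ih =>
    intro j
    induction j using Fin.induction with
    | zero => rfl
    | succ j ihj =>
      have h1 := h' i j
      have key : D i.succ j.succ
          = D i.succ j.castSucc + D i.castSucc j.succ - D i.castSucc j.castSucc := by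
        calc D i.succ j.succ
            = D i.succ j.succ - (D i.castSucc j.castSucc - D i.succ j.castSucc
              - D i.castSucc j.succ + D i.succ j.succ) := by rw [h1, sub_zero]
          _ = D i.succ j.castSucc + D i.castSucc j.succ - D i.castSucc j.castSucc := by abel
      rw [key]
      calc D i.succ j.castSucc + D i.castSucc j.succ - D i.castSucc j.castSucc + D 0 0
          = (D i.succ j.castSucc + D 0 0) + (D i.castSucc j.succ + D 0 0)
            - (D i.castSucc j.castSucc + D 0 0) := by abel
        _ = (D i.succ 0 + D 0 j.castSucc) + (D i.castSucc 0 + D 0 j.succ)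
            - (D i.castSucc 0 + D 0 j.castSucc) := by rw [ihj, ih j.succ, ih j.castSucc]
        _ = D i.succ 0 + D 0 j.succ := by abel

/-- Functions on a type vanishing at a point are equivalent to functions off that point. -/
def subEquiv {α : Type*} [DecidableEq α] (a₀ : α) :
    {f : α → G // f a₀ = 0} ≃ ({x : α // x ≠ a₀} → G) where
  toFun f x := f.1 x.1
  invFun g := ⟨fun x => if h : x = a₀ then 0 else g ⟨x, h⟩, by simp⟩
  left_inv f := by
    ext x
    by_cases h : x = a₀
    · subst h; simp [f.2]
    · simp [h]
  right_inv g := by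
    ext x
    simp [x.2]

end Aux

theorem stmt15 {G : Type*} [AddCommGroup G] [Finite G] {m n : ℕ}
    (hm : 1 ≤ m) (hn : 1 ≤ n) (k : ℕ) (hk : Nat.card G = k)
    (A : Matrix (Fin (m + 1)) (Fin (n + 1)) (Option G))
    (B : Matrix (Fin m) (Fin n) G)
    (hcons : ∃ C, IsCompletion A C ∧ bcs C = B) :
    Nat.card {C : Matrix (Fin (m + 1)) (Fin (n + 1)) G // IsCompletion A C ∧ bcs C = B} =
      k ^ (Nat.card (HGraph A).ConnectedComponent - 1) := by
  classical
  obtain ⟨C₀, hC₀, hB₀⟩ := hcons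
  set Γ := HGraph A with hΓ
  -- filled entries give equal components
  have hedge : ∀ i j, A i j ≠ none →
      Γ.connectedComponentMk (Sum.inl i) = Γ.connectedComponentMk (Sum.inr j) := by
    intro i j hij
    apply SimpleGraph.ConnectedComponent.sound
    apply SimpleGraph.Adj.reachable
    rw [hΓ]
    exact ⟨by simp, Or.inl ⟨i, j, rfl, rfl, hij⟩⟩
  set c₀ := Γ.connectedComponentMk (Sum.inl 0) with hc₀
  -- Equiv 1: completions with bcs B ≃ "difference" matrices
  let DSet := {D : Matrix (Fin (m + 1)) (Fin (n + 1)) G //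
    (∀ i j, A i j ≠ none → D i j = 0) ∧ bcs D = 0}
  let e1 : {C : Matrix (Fin (m + 1)) (Fin (n + 1)) G // IsCompletion A C ∧ bcs C = B} ≃ DSet :=
    { toFun := fun C => ⟨C.1 - C₀, by
        constructor
        · intro i j hij
          have h1 := C.2.1 i j hij
          have h2 := hC₀ i j hij
          rw [h1] at h2
          simp only [Matrix.sub_apply]
          rw [Option.some_inj.mp h2, sub_self]
        · rw [bcs_sub, C.2.2, hB₀, sub_self]⟩
      invFun := fun D => ⟨D.1 + C₀, by
        constructor
        · intro i j hij
          have h2 := hC₀ i j hij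
          have h0 := D.2.1 i j hij
          simp [Matrix.add_apply, h0, h2]
        · rw [bcs_add, D.2.2, hB₀, zero_add]⟩
      left_inv := fun C => by ext i j; simp
      right_inv := fun D => by ext i j; simp }
  -- Equiv 2: difference matrices ≃ functions on components vanishing at c₀
  let e2 : DSet ≃ {f : Γ.ConnectedComponent → G // f c₀ = 0} :=
    { toFun := fun D => by
        have hadj : ∀ v w, Γ.Adj v w →
              Sum.elim (fun i => D.1 i 0 - D.1 0 0) (fun j => - D.1 0 j) v
                = Sum.elim (fun i => D.1 i 0 - D.1 0 0) (fun j => - D.1 0 j) w := by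
            intro v w hvw
            rw [hΓ] at hvw
            obtain ⟨-, hrel⟩ := hvw
            have main : ∀ (i : Fin (m + 1)) (j : Fin (n + 1)), A i j ≠ none →
                D.1 i 0 - D.1 0 0 = - D.1 0 j := by
              intro i j hij
              have h0 := D.2.1 i j hij
              have ht := bcs_tele D.2.2 i j
              rw [h0, zero_add] at ht
              rw [eq_comm, neg_eq_iff_add_eq_zero, ht]
              abel
            rcases hrel with ⟨i, j, rfl, rfl, hij⟩ | ⟨i, j, rfl, rfl, hij⟩
            · simpa using main i j hij
            · simpa using (main i j hij).symm
        have hwalk : ∀ v w (p : Γ.Walk v w),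
            Sum.elim (fun i => D.1 i 0 - D.1 0 0) (fun j => - D.1 0 j) v
              = Sum.elim (fun i => D.1 i 0 - D.1 0 0) (fun j => - D.1 0 j) w := by
          intro v w p
          induction p with
          | nil => rfl
          | cons h _ ih => exact (hadj _ _ h).trans ih
        refine ⟨SimpleGraph.ConnectedComponent.lift
          (Sum.elim (fun i => D.1 i 0 - D.1 0 0) (fun j => - D.1 0 j))
          (fun v w p _ => hwalk v w p), ?_⟩
        rw [hc₀]
        simp
      invFun := fun f => ⟨fun i j =>
          f.1 (Γ.connectedComponentMk (Sum.inl i)) - f.1 (Γ.connectedComponentMk (Sum.inr j)), by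
        constructor
        · intro i j hij
          show f.1 (Γ.connectedComponentMk (Sum.inl i))
            - f.1 (Γ.connectedComponentMk (Sum.inr j)) = 0
          rw [hedge i j hij, sub_self]
        · funext i j
          simp only [bcs, Matrix.zero_apply]
          abel⟩
      left_inv := fun D => by
        ext i j
        simp only [SimpleGraph.ConnectedComponent.lift_mk, Sum.elim_inl, Sum.elim_inr]
        have ht := bcs_tele D.2.2 i j
        have : D.1 i 0 - D.1 0 0 - -D.1 0 j = D.1 i 0 + D.1 0 j - D.1 0 0 := by abel
        rw [this, ← ht, add_sub_cancel_right]
      right_inv := fun f => by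
        ext c
        induction c using SimpleGraph.ConnectedComponent.ind with
        | _ v =>
          rcases v with i | j
          · simp only [SimpleGraph.ConnectedComponent.lift_mk, Sum.elim_inl]
            rw [show Γ.connectedComponentMk (Sum.inl 0) = c₀ from rfl, f.2]
            abel
          · simp only [SimpleGraph.ConnectedComponent.lift_mk, Sum.elim_inr]
            rw [show Γ.connectedComponentMk (Sum.inl 0) = c₀ from rfl, f.2]
            abel }
  have hcard := Nat.card_congr ((e1.trans e2).trans (subEquiv c₀))
  rw [hcard, Nat.card_fun, hk]
  congr 1
  -- Nat.card {c // c ≠ c₀} = Nat.card components - 1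
  haveI : Fintype Γ.ConnectedComponent := Fintype.ofFinite _
  rw [Nat.card_eq_fintype_card, Nat.card_eq_fintype_card]
  rw [Fintype.card_subtype_compl (· = c₀), Fintype.card_subtype_eq]
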